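/- Let f be a four-times differentiable function of u with f'(u) ≠ 0 everywhere. Let q_n = -(n(n-1)/2)·f''/f'^{n+1} and define r_3 = 3 f''^2/f'^5 - f'''/f'^4, with recursion r_{n+1} = (1/f')·[q_n' + r_n] for n ≥ 3. Then r_n = ((n-2)(n^2-1)n/8)·f''^2/f'^{n+2} - ((n-2)(n-1)n/6)·f'''/f'^{n+1} for all n ≥ 3. -/

import Mathlib

lemma dq_aux (f : ℝ → ℝ) (hf' : Differentiable ℝ (deriv f))
    (hf'' : Differentiable ℝ (deriv (deriv f)))
    (hne : ∀ u, deriv f u ≠ 0) (c : ℝ) (n : ℕ) (u : ℝ) :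
    deriv (fun u => c * deriv (deriv f) u / (deriv f u) ^ ((n : ℤ) + 1)) u =
      c * deriv (deriv (deriv f)) u / (deriv f u) ^ (n + 1)
        - c * ((n : ℝ) + 1) * (deriv (deriv f) u) ^ 2 / (deriv f u) ^ (n + 2) := by
  have h1 : HasDerivAt (fun u => (deriv f u) ^ (-(n : ℤ) - 1))
      ((-(n:ℤ) - 1) * (deriv f u) ^ (-(n:ℤ) - 2) * deriv (deriv f) u) u := by
    have := (hasDerivAt_zpow (-(n:ℤ)-1) (deriv f u) (Or.inl (hne u))).comp u
      (hf'.differentiableAt.hasDerivAt)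
    rw [show (-(n:ℤ) - 2) = -(n:ℤ) - 1 - 1 by ring]
    push_cast at this ⊢
    exact this
  have h2 : HasDerivAt (fun u => c * deriv (deriv f) u * (deriv f u) ^ (-(n : ℤ) - 1))
      (c * deriv (deriv (deriv f)) u * (deriv f u) ^ (-(n:ℤ)-1)
        + c * deriv (deriv f) u * ((-(n:ℤ) - 1) * (deriv f u) ^ (-(n:ℤ) - 2) * deriv (deriv f) u)) u :=
    ((hf''.differentiableAt.hasDerivAt.const_mul c).mul h1)
  have key : (fun u => c * deriv (deriv f) u / (deriv f u) ^ ((n : ℤ) + 1)) =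
      fun u => c * deriv (deriv f) u * (deriv f u) ^ (-(n : ℤ) - 1) := by
    funext v
    rw [div_eq_mul_inv, ← zpow_neg]
    ring_nf
  rw [key, h2.deriv]
  have hz : ∀ (m : ℕ), (deriv f u) ^ (-(m:ℤ)) = ((deriv f u) ^ m)⁻¹ := by
    intro m; rw [zpow_neg, zpow_natCast]
  have e1 : (-(n:ℤ) - 1) = -((n+1 : ℕ) : ℤ) := by push_cast; ring
  have e2 : (-(n:ℤ) - 2) = -((n+2 : ℕ) : ℤ) := by push_cast; ring
  rw [e1, e2, hz, hz]
  have := hne u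
  field_simp
  push_cast
  ring

/-- With `q n = -(n(n-1)/2) f''/f'^(n+1)`,
`r 3 = 3 f''^2/f'^5 - f'''/f'^4` and `r (n+1) = (1/f') * ((q n)' + r n)` for
`n ≥ 3`, one has
`r n = ((n-2)(n^2-1)n/8) f''^2/f'^(n+2) - ((n-2)(n-1)n/6) f'''/f'^(n+1)`
for all `n ≥ 3`. -/
theorem stmt8 (f : ℝ → ℝ) (hf : Differentiable ℝ f)
    (hf' : Differentiable ℝ (deriv f))
    (hf'' : Differentiable ℝ (deriv (deriv f)))
    (hf''' : Differentiable ℝ (deriv (deriv (deriv f))))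
    (hne : ∀ u, deriv f u ≠ 0)
    (q r : ℕ → ℝ → ℝ)
    (hq : ∀ n, ∀ u, q n u =
      -((n : ℝ) * ((n : ℝ) - 1) / 2) * deriv (deriv f) u / (deriv f u) ^ ((n : ℤ) + 1))
    (hr3 : ∀ u, r 3 u =
      3 * (deriv (deriv f) u) ^ 2 / (deriv f u) ^ 5
        - deriv (deriv (deriv f)) u / (deriv f u) ^ 4)
    (hrec : ∀ n ≥ 3, ∀ u, r (n + 1) u = (deriv f u)⁻¹ * (deriv (q n) u + r n u)) :
    ∀ n ≥ 3, ∀ u, r n u =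
      ((n : ℝ) - 2) * ((n : ℝ) ^ 2 - 1) * (n : ℝ) / 8
          * (deriv (deriv f) u) ^ 2 / (deriv f u) ^ ((n : ℤ) + 2)
        - ((n : ℝ) - 2) * ((n : ℝ) - 1) * (n : ℝ) / 6
          * deriv (deriv (deriv f)) u / (deriv f u) ^ ((n : ℤ) + 1) := by
  have hzp : ∀ (m : ℕ) (u : ℝ), (deriv f u) ^ (m : ℤ) = (deriv f u) ^ m := fun m u =>
    zpow_natCast _ m
  intro n hn
  induction n, hn using Nat.le_induction with
  | base =>
    intro u
    have e2 : ((3 : ℕ) : ℤ) + 2 = ((5 : ℕ) : ℤ) := by norm_num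
    have e1 : ((3 : ℕ) : ℤ) + 1 = ((4 : ℕ) : ℤ) := by norm_num
    rw [hr3 u, e2, e1, hzp, hzp]
    norm_num
  | succ n hn ih =>
    intro u
    have hq' : q n = fun u =>
        -((n : ℝ) * ((n : ℝ) - 1) / 2) * deriv (deriv f) u / (deriv f u) ^ ((n : ℤ) + 1) := by
      funext v; exact hq n v
    have hd := dq_aux f hf' hf'' hne (-((n : ℝ) * ((n : ℝ) - 1) / 2)) n u
    rw [hrec n hn u, ih u, hq', hd]
    have en2 : ((n : ℤ) + 2) = ((n + 2 : ℕ) : ℤ) := by push_cast; ring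
    have en1 : ((n : ℤ) + 1) = ((n + 1 : ℕ) : ℤ) := by push_cast; ring
    have en3 : (((n + 1 : ℕ) : ℤ) + 2) = ((n + 3 : ℕ) : ℤ) := by push_cast; ring
    have en4 : (((n + 1 : ℕ) : ℤ) + 1) = ((n + 2 : ℕ) : ℤ) := by push_cast; ring
    simp only [en2, en1, en3, en4, hzp]
    have h0 := hne u
    push_cast
    field_simp
    ring
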